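/- arXiv:2107.13867 — 4 statements merged into one kernel-verified Lean document; each statement's English description precedes it below -/
import Mathlib

section
/- Let 0 < λ ≤ 1. For every f ∈ G(λ) with Taylor expansion f(z) = z + a₂z² + ⋯, one has -1 ≤ |a₂| - 1 ≤ λ/2 - 1; equivalently, |a₂| ≤ λ/2. -/
open Complex Metric Real

/-!
The function `h z = z f''(z) / f'(z)` is holomorphic on the disk, vanishes at `0`, and has
real part `< λ/2`. The Möbius map `w ↦ w / (λ - w)` sends the half-plane `Re w < λ/2` into
the unit disk, so the Schwarz lemma bounds the derivative of the composite at `0`, which is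
`h'(0) / λ = f''(0) / λ = 2 a₂ / λ`.
-/

theorem norm_div_two_mul_sub_lt_one {w : ℂ} {c : ℝ} (hc : 0 < c) (hw : w.re < c) :
    ‖w / (2 * c - w)‖ < 1 := by
  have hsq : ‖w‖ ^ 2 < ‖2 * (c : ℂ) - w‖ ^ 2 := by
    rw [Complex.sq_norm, Complex.sq_norm]
    simp only [Complex.normSq_apply, Complex.sub_re, Complex.sub_im, Complex.mul_re,
      Complex.mul_im, Complex.ofReal_re, Complex.ofReal_im]
    norm_num
    nlinarith [mul_pos hc (sub_pos.2 hw)]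
  have hlt : ‖w‖ < ‖2 * (c : ℂ) - w‖ := lt_of_pow_lt_pow_left₀ 2 (norm_nonneg _) hsq
  rw [norm_div, div_lt_one ((norm_nonneg w).trans_lt hlt)]
  exact hlt

theorem norm_deriv_le_of_re_lt {φ : ℂ → ℂ} {z₀ : ℂ} {R c : ℝ}
    (hd : DifferentiableOn ℂ φ (ball z₀ R)) (hR : 0 < R) (h₀ : φ z₀ = 0)
    (hre : ∀ z ∈ ball z₀ R, (φ z).re < c) : ‖deriv φ z₀‖ ≤ 2 * c / R := by
  have hc : 0 < c := by simpa [h₀] using hre z₀ (mem_ball_self hR)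
  have hden : ∀ z ∈ ball z₀ R, 2 * (c : ℂ) - φ z ≠ 0 := fun z hz hzero => by
    have := congrArg Complex.re hzero
    simp only [Complex.sub_re, Complex.mul_re, Complex.ofReal_re, Complex.ofReal_im,
      Complex.zero_re] at this
    norm_num at this
    linarith [hre z hz]
  set u : ℂ → ℂ := fun z => φ z / (2 * c - φ z)
  have hu_diff : DifferentiableOn ℂ u (ball z₀ R) :=
    hd.div ((differentiableOn_const _).sub hd) hden
  have hu_maps : Set.MapsTo u (ball z₀ R) (closedBall (u z₀) 1) := fun z hz => by
    simpa [u, h₀] using (norm_div_two_mul_sub_lt_one hc (hre z hz)).le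
  have hc0 : (c : ℂ) ≠ 0 := by exact_mod_cast hc.ne'
  have hu_deriv : deriv u z₀ = deriv φ z₀ / (2 * c) := by
    have hφ := (hd.differentiableAt (ball_mem_nhds z₀ hR)).hasDerivAt
    refine (hφ.div (hφ.const_sub _) (hden z₀ (mem_ball_self hR))).deriv.trans ?_
    rw [h₀]
    field_simp
    ring
  have hschwarz := norm_deriv_le_div_of_mapsTo_ball hu_diff hu_maps hR
  rw [hu_deriv, norm_div, div_le_div_iff₀ (norm_pos_iff.2 (mul_ne_zero two_ne_zero hc0)) hR]
    at hschwarz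
  rw [le_div_iff₀ hR]
  simpa [abs_of_pos hc] using hschwarz

theorem hasDerivAt_id_mul_zero {𝕜 : Type*} [NontriviallyNormedField 𝕜] {q : 𝕜 → 𝕜}
    (hq : DifferentiableAt 𝕜 q 0) : HasDerivAt (fun z => z * q z) (q 0) 0 :=
  ((hasDerivAt_id' (0 : 𝕜)).fun_mul hq.hasDerivAt).congr_deriv (by simp)

theorem stmt_8_general (lam : ℝ)
    (f : ℂ → ℂ) (hf : AnalyticOnNhd ℂ f (ball 0 1))
    (hf1 : deriv f 0 = 1)
    (hf' : ∀ z ∈ ball (0 : ℂ) 1, deriv f z ≠ 0)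
    (hre : ∀ z ∈ ball (0 : ℂ) 1,
      (1 + z * deriv (deriv f) z / deriv f z).re < 1 + lam / 2) :
    -1 ≤ ‖iteratedDeriv 2 f 0 / 2‖ - 1 ∧
      ‖iteratedDeriv 2 f 0 / 2‖ - 1 ≤ lam / 2 - 1 := by
  set q : ℂ → ℂ := fun z => deriv (deriv f) z / deriv f z
  have hq : DifferentiableOn ℂ q (ball 0 1) := fun z hz =>
    ((hf.deriv.deriv z hz).differentiableAt.div (hf.deriv z hz).differentiableAt
      (hf' z hz)).differentiableWithinAt
  have hbound : ‖deriv (fun z => z * q z) 0‖ ≤ 2 * (lam / 2) / 1 :=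
    norm_deriv_le_of_re_lt (differentiableOn_id.mul hq) one_pos (zero_mul _) fun z hz => by
      have := hre z hz
      simp only [Complex.add_re, Complex.one_re, q, ← mul_div_assoc] at this ⊢
      linarith
  have ha₂ : deriv (fun z => z * q z) 0 = iteratedDeriv 2 f 0 := by
    rw [(hasDerivAt_id_mul_zero (hq.differentiableAt (ball_mem_nhds 0 one_pos))).deriv]
    simp [q, hf1, iteratedDeriv_succ]
  refine ⟨by linarith [norm_nonneg (iteratedDeriv 2 f 0 / 2)], ?_⟩
  rw [norm_div, ← ha₂, Complex.norm_two]
  linarith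

/-- For `0 < λ ≤ 1` and `f ∈ G(λ)` with Taylor expansion
`f(z) = z + a₂ z² + ⋯`, one has `-1 ≤ |a₂| - 1 ≤ λ/2 - 1`, where
`a₂ = iteratedDeriv 2 f 0 / 2`. -/
theorem stmt_8 (lam : ℝ) (hlam₁ : 0 < lam) (hlam₂ : lam ≤ 1)
    (f : ℂ → ℂ) (hf : AnalyticOnNhd ℂ f (ball 0 1))
    (hf0 : f 0 = 0) (hf1 : deriv f 0 = 1)
    (hf' : ∀ z ∈ ball (0 : ℂ) 1, deriv f z ≠ 0)
    (hre : ∀ z ∈ ball (0 : ℂ) 1,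
      (1 + z * deriv (deriv f) z / deriv f z).re < 1 + lam / 2) :
    -1 ≤ ‖iteratedDeriv 2 f 0 / 2‖ - 1 ∧
      ‖iteratedDeriv 2 f 0 / 2‖ - 1 ≤ lam / 2 - 1 :=
  stmt_8_general lam f hf hf1 hf' hre
end

section
/- Let 0 < λ ≤ 1. For every f ∈ G(λ) with Taylor expansion f(z) = z + a₂z² + a₃z³ + ⋯, one has |a₃| - |a₂| ≥ λ(4λ - 17)/(24(2 - λ)) if 0 < λ ≤ 1/2, and |a₃| - |a₂| ≥ -λ(λ + 2)/6 if 1/2 ≤ λ ≤ 1. -/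
open Complex ComplexConjugate Metric Real Set Filter Topology

/-!
Put `u = z f''/f'`. The condition `Re u < λ/2` says exactly that `|u| < |λ - u|`, so
`ω = u / (λ - u)` maps the disc into itself with `ω 0 = 0`, and by the Schwarz lemma
`ω = z g` with `|g| ≤ 1`. Solving for `f''/f' = g (λ - z f''/f')` and differentiating at `0` gives
`2 a₂ = λ b₁` and `6 a₃ = λ b₂ - λ (1 - λ) b₁²` with `b₁ = g 0`, `b₂ = g' 0`, while the
Schwarz–Pick lemma gives `|b₂| ≤ 1 - |b₁|²`. Hence `6 |a₃| ≥ max (0, λ ((2 - λ) t² - 1))` and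
`2 |a₂| = λ t` with `t = |b₁| ≤ 1`, and it remains to minimise over `t`.
-/

theorem norm_lt_norm_ofReal_sub_of_re_lt_half {c : ℝ} (hc : 0 < c) {w : ℂ} (hw : w.re < c / 2) :
    ‖w‖ < ‖(c : ℂ) - w‖ := by
  have key : normSq ((c : ℂ) - w) - normSq w = c * (c - 2 * w.re) := by
    simp only [normSq_apply, sub_re, sub_im, ofReal_re, ofReal_im]
    ring
  have : normSq w < normSq ((c : ℂ) - w) := by nlinarith
  rwa [← sq_lt_sq₀ (norm_nonneg _) (norm_nonneg _), Complex.sq_norm, Complex.sq_norm]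

theorem norm_sub_lt_norm_one_sub_conj_mul {a w : ℂ} (ha : ‖a‖ < 1) (hw : ‖w‖ < 1) :
    ‖w - a‖ < ‖1 - conj a * w‖ := by
  have key : normSq (1 - conj a * w) - normSq (w - a) = (1 - normSq a) * (1 - normSq w) := by
    simp only [normSq_apply, sub_re, sub_im, mul_re, mul_im, conj_re, conj_im, one_re, one_im]
    ring
  rw [← sq_lt_sq₀ (norm_nonneg _) (norm_nonneg _), Complex.sq_norm, Complex.sq_norm]
  rw [← sq_lt_one_iff₀ (norm_nonneg _), Complex.sq_norm] at ha hw
  nlinarith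

theorem norm_deriv_le_one_sub_sq_of_mapsTo_ball {g : ℂ → ℂ}
    (hd : DifferentiableOn ℂ g (ball 0 1)) (hg : MapsTo g (ball 0 1) (ball 0 1)) :
    ‖deriv g 0‖ ≤ 1 - ‖g 0‖ ^ 2 := by
  set a := g 0
  have h0 : (0 : ℂ) ∈ ball (0 : ℂ) 1 := mem_ball_self one_pos
  have ha : ‖a‖ < 1 := mem_ball_zero_iff.1 (hg h0)
  have hden : ∀ z ∈ ball (0 : ℂ) 1, 1 - conj a * g z ≠ 0 := fun z hz => by
    refine sub_ne_zero.2 (ne_of_apply_ne norm ?_)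
    rw [norm_one, norm_mul, RCLike.norm_conj]
    nlinarith [mem_ball_zero_iff.1 (hg hz), norm_nonneg a, norm_nonneg (g z)]
  -- `g` followed by the automorphism of the disc that moves `g 0` to `0`
  set h := fun z => (g z - a) / (1 - conj a * g z)
  have hh_maps : MapsTo h (ball 0 1) (closedBall (h 0) 1) := fun z hz => by
    rw [show h 0 = 0 by simp [h, a], mem_closedBall_zero_iff, norm_div]
    exact (div_lt_one (norm_pos_iff.2 (hden z hz))).2
      (norm_sub_lt_norm_one_sub_conj_mul ha (mem_ball_zero_iff.1 (hg hz))) |>.le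
  have hh_deriv : deriv h 0 = deriv g 0 / (1 - ‖a‖ ^ 2 : ℝ) := by
    have hg0 := (hd.differentiableAt (isOpen_ball.mem_nhds h0)).hasDerivAt
    have := (hg0.sub_const a).fun_div ((hg0.const_mul (conj a)).const_sub 1) (hden 0 h0)
    rw [this.deriv, sub_self, zero_mul, sub_zero, sq, ← div_div, mul_div_cancel_right₀ _ (hden 0 h0),
      conj_mul']
    push_cast; rfl
  have hpos : 0 < 1 - ‖a‖ ^ 2 := by nlinarith [norm_nonneg a]
  have hh_diff : DifferentiableOn ℂ h (ball 0 1) :=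
    (hd.sub_const a).div ((differentiableOn_const 1).sub (hd.const_mul _)) hden
  have := norm_deriv_le_one_of_mapsTo_ball hh_diff hh_maps one_pos
  rwa [hh_deriv, norm_div, norm_real, Real.norm_of_nonneg hpos.le, div_le_one hpos] at this

theorem norm_deriv_le_one_sub_sq {g : ℂ → ℂ}
    (hd : DifferentiableOn ℂ g (ball 0 1)) (hg : MapsTo g (ball 0 1) (closedBall 0 1)) :
    ‖deriv g 0‖ ≤ 1 - ‖g 0‖ ^ 2 := by
  by_cases hlt : MapsTo g (ball 0 1) (ball 0 1)
  · exact norm_deriv_le_one_sub_sq_of_mapsTo_ball hd hlt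
  obtain ⟨z₀, hz₀, hgz₀⟩ := not_forall₂.1 hlt
  have hgz₀ : 1 ≤ ‖g z₀‖ := not_lt.1 (mt mem_ball_zero_iff.2 hgz₀)
  have hmax : IsMaxOn (norm ∘ g) (ball 0 1) z₀ := fun z hz =>
    (mem_closedBall_zero_iff.1 (hg hz)).trans hgz₀
  have hconst := Complex.eq_const_of_exists_max hd hz₀ hmax
  have h0 : (0 : ℂ) ∈ ball (0 : ℂ) 1 := mem_ball_self one_pos
  have hderiv : deriv g 0 = 0 := by
    rw [(Filter.eventuallyEq_of_mem (isOpen_ball.mem_nhds h0) hconst).deriv_eq]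
    exact deriv_const 0 (g z₀)
  have hnorm : ‖g 0‖ = 1 := by
    rw [hconst h0]
    exact le_antisymm (mem_closedBall_zero_iff.1 (hg hz₀)) hgz₀
  simp [hderiv, hnorm]

theorem dslope_mul_self_zero {𝕜 : Type*} [NontriviallyNormedField 𝕜] {g : 𝕜 → 𝕜}
    (hg : DifferentiableAt 𝕜 g 0) : dslope (fun z => z * g z) 0 = g := by
  ext z
  rcases eq_or_ne z 0 with rfl | hz
  · simpa using ((hasDerivAt_id' 0).fun_mul hg.hasDerivAt).deriv
  · simpa using dslope_sub_smul_of_ne g hz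

theorem ofReal_sub_ne_zero_of_re_lt_half {c : ℝ} (hc : 0 < c) {w : ℂ} (hw : w.re < c / 2) :
    (c : ℂ) - w ≠ 0 :=
  norm_pos_iff.1 ((norm_nonneg w).trans_lt (norm_lt_norm_ofReal_sub_of_re_lt_half hc hw))

theorem mapsTo_div_ofReal_sub_mul_closedBall {c : ℝ} (hc : 0 < c) {v : ℂ → ℂ}
    (hv : DifferentiableOn ℂ v (ball 0 1)) (hre : ∀ z ∈ ball (0 : ℂ) 1, (z * v z).re < c / 2) :
    MapsTo (fun z => v z / (c - z * v z)) (ball 0 1) (closedBall 0 1) := by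
  set g := fun z => v z / (c - z * v z)
  have hden : ∀ z ∈ ball (0 : ℂ) 1, (c : ℂ) - z * v z ≠ 0 := fun z hz =>
    ofReal_sub_ne_zero_of_re_lt_half hc (hre z hz)
  have hg : DifferentiableOn ℂ g (ball 0 1) :=
    hv.div ((differentiableOn_const _).sub (differentiableOn_id.mul hv)) hden
  have hω : MapsTo (fun z => z * g z) (ball 0 1) (closedBall (0 * g 0) 1) := fun z hz => by
    rw [zero_mul, mem_closedBall_zero_iff]
    change ‖z * (v z / _)‖ ≤ 1
    rw [← mul_div_assoc, norm_div]
    exact div_le_one_of_le₀ (norm_lt_norm_ofReal_sub_of_re_lt_half hc (hre z hz)).le (norm_nonneg _)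
  intro z hz
  have := norm_dslope_le_div_of_mapsTo_ball (differentiableOn_id.fun_mul hg) hω hz
  rwa [dslope_mul_self_zero (hg.differentiableAt (isOpen_ball.mem_nhds (mem_ball_self one_pos))),
    div_one, ← mem_closedBall_zero_iff] at this

theorem eq_mul_and_deriv_eq_of_eventuallyEq_mul_sub {𝕜 : Type*} [NontriviallyNormedField 𝕜]
    {c : 𝕜} {v g : 𝕜 → 𝕜} (hv : DifferentiableAt 𝕜 v 0) (hg : DifferentiableAt 𝕜 g 0)
    (h : v =ᶠ[𝓝 0] fun z => g z * (c - z * v z)) :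
    v 0 = c * g 0 ∧ deriv v 0 = c * deriv g 0 - g 0 * v 0 := by
  have hrhs := hg.hasDerivAt.fun_mul (((hasDerivAt_id' 0).fun_mul hv.hasDerivAt).const_sub c)
  refine ⟨by simpa [mul_comm] using h.eq_of_nhds, ?_⟩
  rw [(hrhs.congr_of_eventuallyEq h).deriv]
  ring

theorem iteratedDeriv_two_three_of_eventuallyEq_mul {𝕜 : Type*} [NontriviallyNormedField 𝕜]
    {f v : 𝕜 → 𝕜} (hf : DifferentiableAt 𝕜 (deriv f) 0) (hv : DifferentiableAt 𝕜 v 0)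
    (hf1 : deriv f 0 = 1) (h : deriv (deriv f) =ᶠ[𝓝 0] fun z => v z * deriv f z) :
    iteratedDeriv 2 f 0 = v 0 ∧ iteratedDeriv 3 f 0 = deriv v 0 + v 0 ^ 2 := by
  have h2 : deriv (deriv f) 0 = v 0 := by simpa [hf1] using h.eq_of_nhds
  have h3 := (hv.hasDerivAt.fun_mul hf.hasDerivAt).congr_of_eventuallyEq h
  simp only [iteratedDeriv_eq_iterate, Function.iterate_succ, Function.iterate_zero,
    Function.comp_apply, id_eq]
  refine ⟨h2, ?_⟩
  rw [h3.deriv, hf1, h2]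
  ring

theorem exists_coeff_eq_of_re_lt {lam : ℝ} (hlam : 0 < lam) {f : ℂ → ℂ}
    (hf : AnalyticOnNhd ℂ f (ball 0 1)) (hf1 : deriv f 0 = 1)
    (hf' : ∀ z ∈ ball (0 : ℂ) 1, deriv f z ≠ 0)
    (hre : ∀ z ∈ ball (0 : ℂ) 1, (1 + z * deriv (deriv f) z / deriv f z).re < 1 + lam / 2) :
    ∃ b₁ b₂ : ℂ, ‖b₂‖ ≤ 1 - ‖b₁‖ ^ 2 ∧ iteratedDeriv 2 f 0 = lam * b₁ ∧
      iteratedDeriv 3 f 0 = lam * b₂ - lam * (1 - lam) * b₁ ^ 2 := by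
  have h0 : ball (0 : ℂ) 1 ∈ 𝓝 0 := isOpen_ball.mem_nhds (mem_ball_self one_pos)
  set v := fun z => deriv (deriv f) z / deriv f z
  have hv : DifferentiableOn ℂ v (ball 0 1) := (hf.deriv.deriv.div hf.deriv hf').differentiableOn
  have hvre : ∀ z ∈ ball (0 : ℂ) 1, (z * v z).re < lam / 2 := fun z hz => by
    have := hre z hz
    rw [mul_div_assoc, add_re, one_re] at this
    linarith
  -- `z * g z = u / (λ - u)` with `u = z f''/f'`
  set g := fun z => v z / (lam - z * v z)
  have hden : ∀ z ∈ ball (0 : ℂ) 1, (lam : ℂ) - z * v z ≠ 0 := fun z hz =>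
    ofReal_sub_ne_zero_of_re_lt_half hlam (hvre z hz)
  have hg : DifferentiableOn ℂ g (ball 0 1) :=
    hv.div ((differentiableOn_const _).sub (differentiableOn_id.mul hv)) hden
  have hvg : v =ᶠ[𝓝 0] fun z => g z * (lam - z * v z) :=
    eventuallyEq_of_mem h0 fun z hz => (div_mul_cancel₀ _ (hden z hz)).symm
  have hfv : deriv (deriv f) =ᶠ[𝓝 0] fun z => v z * deriv f z :=
    eventuallyEq_of_mem h0 fun z hz => (div_mul_cancel₀ _ (hf' z hz)).symm
  obtain ⟨hv0, hv'0⟩ := eq_mul_and_deriv_eq_of_eventuallyEq_mul_sub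
    (hv.differentiableAt h0) (hg.differentiableAt h0) hvg
  obtain ⟨h2, h3⟩ := iteratedDeriv_two_three_of_eventuallyEq_mul
    (hf.deriv.differentiableOn.differentiableAt h0) (hv.differentiableAt h0) hf1 hfv
  refine ⟨g 0, deriv g 0,
    norm_deriv_le_one_sub_sq hg (mapsTo_div_ofReal_sub_mul_closedBall hlam hv hvre), ?_, ?_⟩
  · rw [h2, hv0]
  · rw [h3, hv'0, hv0]
    ring

theorem mul_sub_le_norm_mul_sub_mul_sq {c : ℝ} (hc : 0 ≤ c) {b₁ b₂ : ℂ}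
    (hb : ‖b₂‖ ≤ 1 - ‖b₁‖ ^ 2) :
    c * ((2 - c) * ‖b₁‖ ^ 2 - 1) ≤ ‖c * b₂ - c * (1 - c) * b₁ ^ 2‖ := by
  have h1 : ‖(c : ℂ) * (1 - c) * b₁ ^ 2‖ = c * |1 - c| * ‖b₁‖ ^ 2 := by
    rw [show (c : ℂ) * (1 - c) = ((c * (1 - c) : ℝ) : ℂ) by push_cast; ring, norm_mul, norm_pow,
      norm_real, Real.norm_eq_abs, abs_mul, abs_of_nonneg hc]
  have h2 : ‖(c : ℂ) * b₂‖ = c * ‖b₂‖ := by rw [norm_mul, norm_real, Real.norm_of_nonneg hc]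
  calc c * ((2 - c) * ‖b₁‖ ^ 2 - 1) = c * (1 - c) * ‖b₁‖ ^ 2 - c * (1 - ‖b₁‖ ^ 2) := by ring
    _ ≤ c * |1 - c| * ‖b₁‖ ^ 2 - c * ‖b₂‖ := by
      gcongr
      exact le_abs_self _
    _ = ‖(c : ℂ) * (1 - c) * b₁ ^ 2‖ - ‖(c : ℂ) * b₂‖ := by rw [h1, h2]
    _ ≤ ‖c * b₂ - c * (1 - c) * b₁ ^ 2‖ := by rw [norm_sub_rev]; exact norm_sub_norm_le _ _

theorem le_sub_mul_div_two_of_lt_two {c t x : ℝ} (hc₀ : 0 < c) (hc₂ : c < 2) (hx₀ : 0 ≤ x)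
    (hx : c * ((2 - c) * t ^ 2 - 1) / 6 ≤ x) :
    c * (4 * c - 17) / (24 * (2 - c)) ≤ x - c * t / 2 := by
  have h2c : 0 < 2 - c := by linarith
  rw [div_le_iff₀ (by positivity)]
  rcases le_or_gt ((2 - c) * t ^ 2) 1 with ht | ht
  · have h1 : (12 * (2 - c) * t) ^ 2 ≤ 144 * (2 - c) := by nlinarith
    have h2 : 144 * (2 - c) ≤ (17 - 4 * c) ^ 2 := by nlinarith [sq_nonneg (4 * c + 1)]
    have h3 : 12 * (2 - c) * t ≤ 17 - 4 * c := abs_le_of_sq_le_sq' (h1.trans h2) (by linarith) |>.2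
    nlinarith
  · -- `c ((2 - c) t² - 3 t - 1)` is minimal at `t = 3 / (2 (2 - c))`
    nlinarith [sq_nonneg (2 * (2 - c) * t - 3)]

theorem le_sub_mul_div_two_of_half_le {c t x : ℝ} (hc₀ : 1 / 2 ≤ c) (hc₁ : c ≤ 1) (ht₁ : t ≤ 1)
    (hx₀ : 0 ≤ x) (hx : c * ((2 - c) * t ^ 2 - 1) / 6 ≤ x) :
    -(c * (c + 2)) / 6 ≤ x - c * t / 2 := by
  rcases le_or_gt ((2 - c) * t ^ 2) 1 with ht | ht
  · have h1 : (3 * t) ^ 2 * (2 - c) ≤ 9 := by nlinarith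
    have h2 : 9 ≤ (c + 2) ^ 2 * (2 - c) := by
      nlinarith [mul_nonneg (sub_nonneg.2 hc₁) (by nlinarith : (0 : ℝ) ≤ c ^ 2 + 3 * c - 1)]
    have h3 : 3 * t ≤ c + 2 := by nlinarith
    nlinarith
  · have : 0 ≤ c * ((1 - t) * (1 + c - (2 - c) * t)) :=
      mul_nonneg (by linarith) (mul_nonneg (by linarith) (by nlinarith))
    nlinarith

theorem stmt_10_general (lam : ℝ) (hlam₁ : 0 < lam) (hlam₂ : lam ≤ 1)
    (f : ℂ → ℂ) (hf : AnalyticOnNhd ℂ f (ball 0 1))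
    (hf1 : deriv f 0 = 1)
    (hf' : ∀ z ∈ ball (0 : ℂ) 1, deriv f z ≠ 0)
    (hre : ∀ z ∈ ball (0 : ℂ) 1,
      (1 + z * deriv (deriv f) z / deriv f z).re < 1 + lam / 2) :
    (lam ≤ 1 / 2 →
      lam * (4 * lam - 17) / (24 * (2 - lam)) ≤
        ‖iteratedDeriv 3 f 0 / 6‖ - ‖iteratedDeriv 2 f 0 / 2‖) ∧
    (1 / 2 ≤ lam →
      -(lam * (lam + 2)) / 6 ≤
        ‖iteratedDeriv 3 f 0 / 6‖ - ‖iteratedDeriv 2 f 0 / 2‖) := by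
  obtain ⟨b₁, b₂, hb, h2, h3⟩ := exists_coeff_eq_of_re_lt hlam₁ hf hf1 hf' hre
  have hb₁ : ‖b₁‖ ≤ 1 := by nlinarith [norm_nonneg b₁, norm_nonneg b₂]
  have ha₂ : ‖iteratedDeriv 2 f 0 / 2‖ = lam * ‖b₁‖ / 2 := by
    rw [h2, norm_div, norm_mul, norm_real, Real.norm_of_nonneg hlam₁.le]
    norm_num
  have ha₃ : lam * ((2 - lam) * ‖b₁‖ ^ 2 - 1) / 6 ≤ ‖iteratedDeriv 3 f 0 / 6‖ := by
    rw [h3, norm_div, show ‖(6 : ℂ)‖ = 6 by norm_num]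
    gcongr
    exact mul_sub_le_norm_mul_sub_mul_sq hlam₁.le hb
  rw [ha₂]
  exact ⟨fun _ => le_sub_mul_div_two_of_lt_two hlam₁ (by linarith) (norm_nonneg _) ha₃,
    fun h => le_sub_mul_div_two_of_half_le h hlam₂ hb₁ (norm_nonneg _) ha₃⟩

/-- For `0 < λ ≤ 1` and `f ∈ G(λ)`, one has
`|a₃| - |a₂| ≥ λ(4λ - 17)/(24(2 - λ))` when `0 < λ ≤ 1/2`, and
`|a₃| - |a₂| ≥ -λ(λ + 2)/6` when `1/2 ≤ λ ≤ 1`, where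
`a₂ = iteratedDeriv 2 f 0 / 2` and `a₃ = iteratedDeriv 3 f 0 / 6`. -/
theorem stmt_10 (lam : ℝ) (hlam₁ : 0 < lam) (hlam₂ : lam ≤ 1)
    (f : ℂ → ℂ) (hf : AnalyticOnNhd ℂ f (ball 0 1))
    (hf0 : f 0 = 0) (hf1 : deriv f 0 = 1)
    (hf' : ∀ z ∈ ball (0 : ℂ) 1, deriv f z ≠ 0)
    (hre : ∀ z ∈ ball (0 : ℂ) 1,
      (1 + z * deriv (deriv f) z / deriv f z).re < 1 + lam / 2) :
    (lam ≤ 1 / 2 →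
      lam * (4 * lam - 17) / (24 * (2 - lam)) ≤
        ‖iteratedDeriv 3 f 0 / 6‖ - ‖iteratedDeriv 2 f 0 / 2‖) ∧
    (1 / 2 ≤ lam →
      -(lam * (lam + 2)) / 6 ≤
        ‖iteratedDeriv 3 f 0 / 6‖ - ‖iteratedDeriv 2 f 0 / 2‖) :=
  stmt_10_general lam hlam₁ hlam₂ f hf hf1 hf' hre
end

section
/- (Libera–Złotkiewicz) Let c₁ be a real number with -2 ≤ c₁ ≤ 2 and let c₂, c₃ ∈ ℂ. There exists p ∈ 𝒫 whose Taylor expansion p(z) = 1 + c₁z + c₂z² + c₃z³ + ⋯ has these prescribed first three coefficients if and only if there exist x, y ∈ ℂ with |x| ≤ 1 and |y| ≤ 1 such that 2c₂ = c₁² + (4 - c₁²)x and 4c₃ = c₁³ + 2(4 - c₁²)c₁x - (4 - c₁²)c₁x² + 2(4 - c₁²)(1 - |x|²)y. -/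
/-!
Write `p = (1 + zψ) / (1 - zψ)`: by the Cayley transform and the Schwarz lemma, `p ∈ 𝒫` exactly
when `ψ` is a Schur function (holomorphic on `𝔻` with `|ψ| ≤ 1`). Two steps of the Schur algorithm,
`ψ = (γ + zψ₁) / (1 + γ̄zψ₁)` and `ψ₁ = (x + zψ₂) / (1 + x̄zψ₂)`, produce Schur functions `ψ₁`, `ψ₂`
(a Schur function with a unimodular value at `0` is constant by the maximum modulus principle, and
then `0` serves as the next one); conversely, starting from `ψ₂ ≡ y`, every `γ, x, y` in the closed
disc arises in this way. Cleared of denominators, the relations read `p = 1 + zψ(1 + p)` and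
`ψ = γ + zψ₁(1 - γ̄ψ)`, and the Leibniz rule computes the first three Taylor coefficients of `p`
from `γ = c₁ / 2`, `x = ψ₁ 0` and `y = ψ₂ 0`.
-/

open Complex Metric Real
open Filter Topology Set ComplexConjugate

section TaylorCoefficients

variable {𝕜 : Type*} [NontriviallyNormedField 𝕜]

theorem iteratedDeriv_succ_of_eventuallyEq_const_add_mul {f g : 𝕜 → 𝕜} {c : 𝕜} {n : ℕ}
    (hg : ContDiffAt 𝕜 (n + 1) g 0) (h : f =ᶠ[𝓝 0] fun z => c + z * g z) :
    iteratedDeriv (n + 1) f 0 = (n + 1) * iteratedDeriv n g 0 := by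
  have hmul := iteratedDeriv_fun_mul (f := fun z => z) (n := n + 1) (x := (0 : 𝕜))
    (by fun_prop) (by exact_mod_cast hg)
  rw [h.iteratedDeriv_eq, iteratedDeriv_const_add n.succ_pos, hmul, Finset.sum_range_succ',
    Finset.sum_range_succ']
  simp [iteratedDeriv_fun_id_zero]

theorem iteratedDeriv_one_two_three_of_eventuallyEq {f g : 𝕜 → 𝕜} {a b : 𝕜}
    (hf : ContDiffAt 𝕜 3 f 0) (hg : ContDiffAt 𝕜 3 g 0)
    (h : f =ᶠ[𝓝 0] fun z => f 0 + z * (g z * (b + a * f z))) :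
    iteratedDeriv 1 f 0 = g 0 * (b + a * f 0) ∧
    iteratedDeriv 2 f 0 = 2 * (iteratedDeriv 1 g 0 * (b + a * f 0) +
      a * g 0 * iteratedDeriv 1 f 0) ∧
    iteratedDeriv 3 f 0 = 3 * (iteratedDeriv 2 g 0 * (b + a * f 0) +
      2 * a * iteratedDeriv 1 g 0 * iteratedDeriv 1 f 0 + a * g 0 * iteratedDeriv 2 f 0) := by
  have hq : ContDiffAt 𝕜 3 (fun z => g z * (b + a * f z)) 0 := by fun_prop
  have hD (n : ℕ) (hn : n ≤ 2) : iteratedDeriv (n + 1) f 0 =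
      (n + 1) * ∑ i ∈ Finset.range (n + 1),
        n.choose i * iteratedDeriv i g 0 * iteratedDeriv (n - i) (fun z => b + a * f z) 0 := by
    have hn' : ((n : WithTop ℕ∞) + 1) ≤ 3 := by exact_mod_cast (by omega : n + 1 ≤ 3)
    rw [iteratedDeriv_succ_of_eventuallyEq_const_add_mul (hq.of_le hn') h,
      iteratedDeriv_fun_mul ((hg.of_le hn').of_le le_self_add) ?_]
    exact ((contDiffAt_const.add (contDiffAt_const.mul hf)).of_le hn').of_le le_self_add
  refine ⟨by simpa using hD 0 (by norm_num), ?_, ?_⟩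
  · rw [hD 1 (by norm_num)]
    simp only [Nat.cast_one, Nat.reduceAdd, Finset.sum_range_succ, Finset.range_one,
      Finset.sum_singleton, Nat.choose_succ_self_right, zero_add, iteratedDeriv_zero, one_mul,
      tsub_zero, Order.lt_one_iff, iteratedDeriv_const_add, iteratedDeriv_const_mul_field,
      iteratedDeriv_one, Nat.choose_self, tsub_self]
    ring
  · rw [hD 2 le_rfl]
    simp only [Nat.cast_ofNat, Nat.reduceAdd, Finset.sum_range_succ, Finset.range_one,
      Finset.sum_singleton, Nat.choose_zero_right, Nat.cast_one, iteratedDeriv_zero, one_mul,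
      tsub_zero, Order.lt_two_iff, zero_le, iteratedDeriv_const_add,
      iteratedDeriv_const_mul_field, Nat.choose_succ_self_right, iteratedDeriv_one,
      Nat.add_one_sub_one, Order.lt_one_iff, Nat.choose_self, tsub_self]
    ring

end TaylorCoefficients

theorem one_sub_ne_zero_of_norm_lt_one {R : Type*} [NormedRing R] [NormOneClass R] {u : R}
    (hu : ‖u‖ < 1) : 1 - u ≠ 0 :=
  sub_ne_zero.mpr fun h => by simp [← h] at hu

theorem normSq_one_sub_conj_mul_sub_normSq_sub (γ w : ℂ) :
    normSq (1 - conj γ * w) - normSq (w - γ) = (1 - normSq γ) * (1 - normSq w) := by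
  simp only [normSq_apply, sub_re, sub_im, one_re, one_im, mul_re, mul_im, conj_re, conj_im]
  ring

theorem norm_sub_le_norm_one_sub_conj_mul {γ w : ℂ} (hγ : ‖γ‖ ≤ 1) (hw : ‖w‖ ≤ 1) :
    ‖w - γ‖ ≤ ‖1 - conj γ * w‖ := by
  have key := normSq_one_sub_conj_mul_sub_normSq_sub γ w
  simp only [normSq_eq_norm_sq] at key
  refine (pow_le_pow_iff_left₀ (norm_nonneg _) (norm_nonneg _) two_ne_zero).mp ?_
  have : 0 ≤ (1 - ‖γ‖ ^ 2) * (1 - ‖w‖ ^ 2) :=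
    mul_nonneg (sub_nonneg.mpr (pow_le_one₀ (norm_nonneg γ) hγ))
      (sub_nonneg.mpr (pow_le_one₀ (norm_nonneg w) hw))
  linarith

theorem norm_sub_one_le_norm_add_one {w : ℂ} (hw : 0 ≤ w.re) : ‖w - 1‖ ≤ ‖w + 1‖ := by
  refine (pow_le_pow_iff_left₀ (norm_nonneg _) (norm_nonneg _) two_ne_zero).mp ?_
  simp only [← normSq_eq_norm_sq, normSq_apply, sub_re, sub_im, add_re, add_im, one_re, one_im]
  nlinarith

theorem re_one_add_div_one_sub_pos {u : ℂ} (hu : ‖u‖ < 1) : 0 < ((1 + u) / (1 - u)).re := by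
  have hu' : normSq u < 1 := by rw [normSq_eq_norm_sq]; nlinarith [norm_nonneg u]
  rw [div_re, ← add_div]
  refine div_pos ?_ (normSq_pos.mpr (one_sub_ne_zero_of_norm_lt_one hu))
  simp only [normSq_apply, add_re, add_im, sub_re, sub_im, one_re, one_im] at hu' ⊢
  nlinarith

structure IsSchurFunction (f : ℂ → ℂ) : Prop where
  differentiableOn : DifferentiableOn ℂ f (ball 0 1)
  mapsTo : MapsTo f (ball 0 1) (closedBall 0 1)

/-- The Carathéodory class `𝒫`. -/
structure IsCaratheodoryFunction (p : ℂ → ℂ) : Prop where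
  differentiableOn : DifferentiableOn ℂ p (ball 0 1)
  map_zero : p 0 = 1
  re_pos : ∀ z ∈ ball (0 : ℂ) 1, 0 < (p z).re

/-- `ψ = (ψ 0 + z ψ₁) / (1 + conj (ψ 0) z ψ₁)`, cleared of denominators (which may vanish when
`|ψ 0| = 1`). -/
def IsSchurTransform (ψ ψ₁ : ℂ → ℂ) : Prop :=
  ∀ z ∈ ball (0 : ℂ) 1, ψ z = ψ 0 + z * (ψ₁ z * (1 - conj (ψ 0) * ψ z))

/-- `p = (1 + z ψ) / (1 - z ψ)`, cleared of denominators. -/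
def IsCayleyTransform (p ψ : ℂ → ℂ) : Prop :=
  ∀ z ∈ ball (0 : ℂ) 1, p z = 1 + z * (ψ z * (1 + p z))

namespace IsSchurFunction

variable {f : ℂ → ℂ}

theorem norm_le_one (hf : IsSchurFunction f) {z : ℂ} (hz : z ∈ ball (0 : ℂ) 1) : ‖f z‖ ≤ 1 := by
  simpa using hf.mapsTo hz

theorem norm_mul_lt_one (hf : IsSchurFunction f) {z : ℂ} (hz : z ∈ ball (0 : ℂ) 1) :
    ‖z * f z‖ < 1 := by
  rw [norm_mul]
  exact mul_lt_one_of_nonneg_of_lt_one_left (norm_nonneg z) (mem_ball_zero_iff.mp hz)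
    (hf.norm_le_one hz)

theorem const {y : ℂ} (hy : ‖y‖ ≤ 1) : IsSchurFunction fun _ => y :=
  ⟨differentiableOn_const y, fun _ _ => by simpa using hy⟩

theorem dslope (hf : IsSchurFunction f) (h0 : f 0 = 0) : IsSchurFunction (_root_.dslope f 0) where
  differentiableOn := (differentiableOn_dslope (ball_mem_nhds 0 one_pos)).mpr hf.differentiableOn
  mapsTo z hz := by
    simpa using norm_dslope_le_div_of_mapsTo_ball hf.differentiableOn
      (by simpa [h0] using hf.mapsTo) hz

theorem exists_isSchurTransform (hf : IsSchurFunction f) :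
    ∃ f₁, IsSchurFunction f₁ ∧ IsSchurTransform f f₁ := by
  set γ := f 0
  rcases (hf.norm_le_one (mem_ball_self one_pos)).lt_or_eq with hγ | hγ
  · have hden : ∀ z ∈ ball (0 : ℂ) 1, 1 - conj γ * f z ≠ 0 := fun z hz => by
      refine one_sub_ne_zero_of_norm_lt_one ?_
      rw [norm_mul, norm_conj]
      exact mul_lt_one_of_nonneg_of_lt_one_left (norm_nonneg γ) hγ (hf.norm_le_one hz)
    set m : ℂ → ℂ := fun z => (f z - γ) / (1 - conj γ * f z)
    have hm : IsSchurFunction m := by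
      refine ⟨?_, fun z hz => ?_⟩
      · exact (hf.differentiableOn.sub_const γ).div
          ((differentiableOn_const 1).sub (hf.differentiableOn.const_mul _)) hden
      · rw [mem_closedBall_zero_iff, norm_div, div_le_one (norm_pos_iff.mpr (hden z hz))]
        exact norm_sub_le_norm_one_sub_conj_mul hγ.le (hf.norm_le_one hz)
    have hm0 : m 0 = 0 := by simp [m, γ]
    refine ⟨_root_.dslope m 0, hm.dslope hm0, fun z hz => ?_⟩
    have hmz : m z * (1 - conj γ * f z) = f z - γ := div_mul_cancel₀ _ (hden z hz)
    have hslope := sub_smul_dslope m 0 z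
    rw [hm0, sub_zero, sub_zero, smul_eq_mul] at hslope
    clear_value m
    linear_combination -hmz - (1 - conj γ * f z) * hslope
  · have hconst : EqOn f (Function.const ℂ γ) (ball 0 1) :=
      Complex.eq_const_of_exists_max hf.differentiableOn (mem_ball_self one_pos)
        fun z hz => by simpa [hγ] using hf.norm_le_one hz
    exact ⟨fun _ => 0, const (by simp), fun z hz => by simp [hconst hz, γ]⟩

theorem exists_map_zero_eq_isSchurTransform (hf : IsSchurFunction f) {γ : ℂ} (hγ : ‖γ‖ ≤ 1) :
    ∃ ψ, IsSchurFunction ψ ∧ ψ 0 = γ ∧ IsSchurTransform ψ f := by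
  have hden : ∀ z ∈ ball (0 : ℂ) 1, 1 + conj γ * (z * f z) ≠ 0 := fun z hz => by
    rw [← sub_neg_eq_add]
    refine one_sub_ne_zero_of_norm_lt_one ?_
    rw [norm_neg, norm_mul, norm_conj]
    exact mul_lt_one_of_nonneg_of_lt_one_right hγ (norm_nonneg _) (hf.norm_mul_lt_one hz)
  set ψ : ℂ → ℂ := fun z => (γ + z * f z) / (1 + conj γ * (z * f z))
  have hψ0 : ψ 0 = γ := by simp [ψ]
  have hψ : IsSchurFunction ψ := by
    refine ⟨?_, fun z hz => ?_⟩
    · exact ((differentiableOn_const γ).add (differentiableOn_id.mul hf.differentiableOn)).div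
        ((differentiableOn_const 1).add
          ((differentiableOn_id.mul hf.differentiableOn).const_mul _)) hden
    · rw [mem_closedBall_zero_iff, norm_div, div_le_one (norm_pos_iff.mpr (hden z hz))]
      have := norm_sub_le_norm_one_sub_conj_mul (γ := -γ) (by rwa [norm_neg])
        (hf.norm_mul_lt_one hz).le
      rwa [sub_neg_eq_add, add_comm, map_neg, neg_mul, sub_neg_eq_add] at this
  refine ⟨ψ, hψ, hψ0, fun z hz => ?_⟩
  have hψz : ψ z * (1 + conj γ * (z * f z)) = γ + z * f z := div_mul_cancel₀ _ (hden z hz)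
  rw [hψ0]
  clear_value ψ
  linear_combination hψz

theorem exists_isCayleyTransform (hf : IsSchurFunction f) :
    ∃ p, IsCaratheodoryFunction p ∧ IsCayleyTransform p f := by
  have hden : ∀ z ∈ ball (0 : ℂ) 1, 1 - z * f z ≠ 0 := fun z hz =>
    one_sub_ne_zero_of_norm_lt_one (hf.norm_mul_lt_one hz)
  refine ⟨fun z => (1 + z * f z) / (1 - z * f z), ⟨?_, by simp, fun z hz => ?_⟩, fun z hz => ?_⟩
  · exact ((differentiableOn_const 1).add (differentiableOn_id.mul hf.differentiableOn)).div
      ((differentiableOn_const 1).sub (differentiableOn_id.mul hf.differentiableOn)) hden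
  · exact re_one_add_div_one_sub_pos (hf.norm_mul_lt_one hz)
  · field_simp [hden z hz]
    ring

end IsSchurFunction

theorem IsCaratheodoryFunction.exists_isCayleyTransform {p : ℂ → ℂ}
    (hp : IsCaratheodoryFunction p) : ∃ ψ, IsSchurFunction ψ ∧ IsCayleyTransform p ψ := by
  have hden : ∀ z ∈ ball (0 : ℂ) 1, p z + 1 ≠ 0 := fun z hz h => by
    have := hp.re_pos z hz
    rw [eq_neg_of_add_eq_zero_left h] at this
    norm_num at this
  set φ : ℂ → ℂ := fun z => (p z - 1) / (p z + 1)
  have hφ0 : φ 0 = 0 := by simp [φ, hp.map_zero]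
  have hφ : IsSchurFunction φ := by
    refine ⟨(hp.differentiableOn.sub_const 1).div (hp.differentiableOn.add_const 1) hden,
      fun z hz => ?_⟩
    rw [mem_closedBall_zero_iff, norm_div, div_le_one (norm_pos_iff.mpr (hden z hz))]
    exact norm_sub_one_le_norm_add_one (hp.re_pos z hz).le
  refine ⟨dslope φ 0, hφ.dslope hφ0, fun z hz => ?_⟩
  have hφz : φ z * (p z + 1) = p z - 1 := div_mul_cancel₀ _ (hden z hz)
  have hslope := sub_smul_dslope φ 0 z
  rw [hφ0, sub_zero, sub_zero, smul_eq_mul] at hslope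
  clear_value φ
  linear_combination -hφz - (1 + p z) * hslope

theorem iteratedDeriv_eq_of_isCayleyTransform_of_isSchurTransform {p ψ ψ₁ ψ₂ : ℂ → ℂ}
    (hp : DifferentiableOn ℂ p (ball 0 1)) (hψ : DifferentiableOn ℂ ψ (ball 0 1))
    (hψ₁ : DifferentiableOn ℂ ψ₁ (ball 0 1)) (hψ₂ : DifferentiableOn ℂ ψ₂ (ball 0 1))
    (h : IsCayleyTransform p ψ) (h₁ : IsSchurTransform ψ ψ₁) (h₂ : IsSchurTransform ψ₁ ψ₂) :
    iteratedDeriv 1 p 0 = 2 * ψ 0 ∧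
    iteratedDeriv 2 p 0 / 2 = 2 * ψ 0 ^ 2 + 2 * (1 - conj (ψ 0) * ψ 0) * ψ₁ 0 ∧
    iteratedDeriv 3 p 0 / 6 = 2 * ψ 0 ^ 3 + 2 * (1 - conj (ψ 0) * ψ 0) *
      (2 * ψ 0 * ψ₁ 0 - conj (ψ 0) * ψ₁ 0 ^ 2 + (1 - conj (ψ₁ 0) * ψ₁ 0) * ψ₂ 0) := by
  have hball : ball (0 : ℂ) 1 ∈ 𝓝 0 := ball_mem_nhds 0 one_pos
  have hC {f : ℂ → ℂ} (hf : DifferentiableOn ℂ f (ball 0 1)) : ContDiffAt ℂ 3 f 0 :=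
    (hf.analyticAt hball).contDiffAt
  have hp0 : p 0 = 1 := by simpa using h 0 (mem_ball_self one_pos)
  obtain ⟨p1, p2, p3⟩ := iteratedDeriv_one_two_three_of_eventuallyEq (a := 1) (b := 1)
    (hC hp) (hC hψ) (eventually_of_mem hball fun z hz => by rw [hp0]; linear_combination h z hz)
  obtain ⟨ψd1, ψd2, -⟩ := iteratedDeriv_one_two_three_of_eventuallyEq (a := -conj (ψ 0)) (b := 1)
    (hC hψ) (hC hψ₁) (eventually_of_mem hball fun z hz => by linear_combination h₁ z hz)
  obtain ⟨ψ₁d1, -, -⟩ := iteratedDeriv_one_two_three_of_eventuallyEq (a := -conj (ψ₁ 0)) (b := 1)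
    (hC hψ₁) (hC hψ₂) (eventually_of_mem hball fun z hz => by linear_combination h₂ z hz)
  rw [hp0] at p1 p2 p3
  refine ⟨by rw [p1]; ring, by rw [p2, ψd1, p1]; ring, ?_⟩
  rw [p3, p2, ψd2, ψ₁d1, ψd1, p1]
  ring

/-- Libera–Złotkiewicz: Let `-2 ≤ c₁ ≤ 2` be real and `c₂, c₃ ∈ ℂ`.
There exists a Carathéodory function `p ∈ 𝒫` whose Taylor expansion
`p(z) = 1 + c₁ z + c₂ z² + c₃ z³ + ⋯` has these first three coefficients if and only
if there exist `x, y ∈ ℂ`, `|x| ≤ 1`, `|y| ≤ 1`, with `2c₂ = c₁² + (4 - c₁²)x` and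
`4c₃ = c₁³ + 2(4 - c₁²)c₁x - (4 - c₁²)c₁x² + 2(4 - c₁²)(1 - |x|²)y`.
Here the `n`-th Taylor coefficient of `p` is `iteratedDeriv n p 0 / n!`. -/
theorem stmt_13 (c₁ : ℝ) (hc₁ : -2 ≤ c₁ ∧ c₁ ≤ 2) (c₂ c₃ : ℂ) :
    (∃ p : ℂ → ℂ, AnalyticOnNhd ℂ p (ball 0 1) ∧ p 0 = 1 ∧
        (∀ z ∈ ball (0 : ℂ) 1, 0 < (p z).re) ∧
        iteratedDeriv 1 p 0 = (c₁ : ℂ) ∧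
        iteratedDeriv 2 p 0 / 2 = c₂ ∧
        iteratedDeriv 3 p 0 / 6 = c₃) ↔
      ∃ x y : ℂ, ‖x‖ ≤ 1 ∧ ‖y‖ ≤ 1 ∧
        2 * c₂ = (c₁ : ℂ) ^ 2 + (4 - (c₁ : ℂ) ^ 2) * x ∧
        4 * c₃ = (c₁ : ℂ) ^ 3 + 2 * (4 - (c₁ : ℂ) ^ 2) * (c₁ : ℂ) * x -
            (4 - (c₁ : ℂ) ^ 2) * (c₁ : ℂ) * x ^ 2 +
            2 * (4 - (c₁ : ℂ) ^ 2) * (1 - (‖x‖ : ℂ) ^ 2) * y := by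
  have hconj : conj ((c₁ : ℂ) / 2) = c₁ / 2 := by rw [map_div₀, conj_ofReal, map_ofNat]
  constructor
  · rintro ⟨p, hp, hp0, hre, h1, h2, h3⟩
    obtain ⟨ψ, hψ, hpψ⟩ :=
      IsCaratheodoryFunction.exists_isCayleyTransform ⟨hp.differentiableOn, hp0, hre⟩
    obtain ⟨ψ₁, hψ₁, hψψ₁⟩ := hψ.exists_isSchurTransform
    obtain ⟨ψ₂, hψ₂, hψ₁ψ₂⟩ := hψ₁.exists_isSchurTransform
    obtain ⟨d1, d2, d3⟩ := iteratedDeriv_eq_of_isCayleyTransform_of_isSchurTransform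
      hp.differentiableOn hψ.differentiableOn hψ₁.differentiableOn hψ₂.differentiableOn
      hpψ hψψ₁ hψ₁ψ₂
    have hγ : ψ 0 = c₁ / 2 := by linear_combination (h1 - d1) / 2
    rw [hγ, hconj] at d2 d3
    rw [conj_mul'] at d3
    refine ⟨ψ₁ 0, ψ₂ 0, hψ₁.norm_le_one (mem_ball_self one_pos),
      hψ₂.norm_le_one (mem_ball_self one_pos), ?_, ?_⟩
    · linear_combination 2 * (d2 - h2)
    · linear_combination 4 * (d3 - h3)
  · rintro ⟨x, y, hx, hy, h2, h3⟩
    have hγ : ‖(c₁ : ℂ) / 2‖ ≤ 1 := by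
      rw [norm_div, norm_real, Real.norm_eq_abs, RCLike.norm_ofNat, div_le_one two_pos, abs_le]
      exact hc₁
    obtain ⟨ψ₁, hψ₁, hψ₁0, hψ₁ψ₂⟩ :=
      (IsSchurFunction.const hy).exists_map_zero_eq_isSchurTransform hx
    obtain ⟨ψ, hψ, hψ0, hψψ₁⟩ := hψ₁.exists_map_zero_eq_isSchurTransform hγ
    obtain ⟨p, hp, hpψ⟩ := hψ.exists_isCayleyTransform
    obtain ⟨d1, d2, d3⟩ := iteratedDeriv_eq_of_isCayleyTransform_of_isSchurTransform
      hp.differentiableOn hψ.differentiableOn hψ₁.differentiableOn (differentiableOn_const y)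
      hpψ hψψ₁ hψ₁ψ₂
    rw [hψ0] at d1 d2 d3
    rw [hconj, hψ₁0] at d2 d3
    rw [conj_mul'] at d3
    refine ⟨p, hp.differentiableOn.analyticOnNhd isOpen_ball, hp.map_zero, hp.re_pos, ?_, ?_, ?_⟩
    · linear_combination d1
    · linear_combination d2 - h2 / 2
    · linear_combination d3 - h3 / 4
end

section
/- Let -π/2 < γ < π/2, 0 ≤ α < 1, and μ = e^{iγ} cos γ. The function h_{γ,α}(z) = z/(1 - z²)^{(1-α)μ} (with the principal branch of the power) belongs to S_γ(α), and its Taylor coefficients satisfy a₂ = 0 and a₃ = (1-α)μ, so |a₃| - |a₂| = (1-α)cos γ. -/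
/-! With `c = (1 - α) μ` the function is `z G(z)` with `G(z) = (1 - z²)^(-c)`, so
`z h'/h = 1 + 2c z²/(1 - z²)`. As `e^{-iγ} μ = cos γ`, the real part of `e^{-iγ} z h'/h` is
`cos γ + 2(1 - α) cos γ Re(z²/(1 - z²))`, and `Re(w/(1 - w)) > -1/2` on the unit disk gives the
bound `α cos γ`. By Leibniz's rule the `n`-th derivative of `z G(z)` at `0` is `n G⁽ⁿ⁻¹⁾(0)`, and
`G'(0) = 0`, `G''(0) = 2c`. -/

open Complex Metric Real

lemma iteratedDeriv_succ_id_mul_zero {𝕜 : Type*} [NontriviallyNormedField 𝕜] {f : 𝕜 → 𝕜}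
    {n : ℕ} (hf : ContDiffAt 𝕜 (n + 1) f 0) :
    iteratedDeriv (n + 1) (fun z => z * f z) 0 = (n + 1) * iteratedDeriv n f 0 := by
  rw [iteratedDeriv_fun_mul contDiffAt_id (by exact_mod_cast hf), Finset.sum_range_succ',
    Finset.sum_range_succ']
  simp [iteratedDeriv_fun_id_zero]

lemma norm_sq_lt_one {z : ℂ} (hz : ‖z‖ < 1) : ‖z ^ 2‖ < 1 := by
  simpa [norm_pow] using pow_lt_one₀ (norm_nonneg z) hz two_ne_zero

lemma one_sub_sq_mem_slitPlane {z : ℂ} (hz : ‖z‖ < 1) : 1 - z ^ 2 ∈ slitPlane := by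
  simpa [sub_eq_add_neg] using
    mem_slitPlane_of_norm_lt_one (z := -z ^ 2) (by simpa using norm_sq_lt_one hz)

-- `Re (w / (1 - w)) + 1/2 = (1 - ‖w‖²) / (2 ‖1 - w‖²)`.
lemma neg_half_lt_re_div_one_sub {w : ℂ} (hw : ‖w‖ < 1) : -(1 / 2 : ℝ) < (w / (1 - w)).re := by
  have hw2 : w.re * w.re + w.im * w.im < 1 := by
    rw [← normSq_apply, normSq_eq_norm_sq]
    nlinarith [norm_nonneg w]
  have hd : 0 < normSq (1 - w) := normSq_pos.mpr (sub_ne_zero.mpr fun h => by simp [← h] at hw)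
  rw [div_re, ← add_div, lt_div_iff₀ hd]
  simp only [normSq_apply, sub_re, sub_im, one_re, one_im] at hd ⊢
  nlinarith

lemma mul_lt_re_exp_neg_mul_I_mul {γ α : ℝ} (hcos : 0 < Real.cos γ) (hα : α < 1) {u : ℂ}
    (hu : -(1 / 2 : ℝ) < u.re) :
    α * Real.cos γ <
      (cexp (-(γ * I)) * (1 + 2 * ((1 - α) * (cexp (γ * I) * Real.cos γ)) * u)).re := by
  have hrot : cexp (-(γ * I)) * cexp (γ * I) = 1 := by rw [← Complex.exp_add]; simp
  have hre : (cexp (-(γ * I))).re = Real.cos γ := by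
    rw [← neg_mul, ← ofReal_neg, exp_ofReal_mul_I_re, Real.cos_neg]
  have hsplit : cexp (-(γ * I)) * (1 + 2 * ((1 - α) * (cexp (γ * I) * Real.cos γ)) * u) =
      cexp (-(γ * I)) + ((2 * (1 - α) * Real.cos γ : ℝ) : ℂ) * u := by
    simp only [ofReal_mul, ofReal_sub, ofReal_one, ofReal_ofNat]
    linear_combination 2 * (1 - α) * Real.cos γ * u * hrot
  rw [hsplit, add_re, hre, re_ofReal_mul]
  nlinarith [mul_pos (sub_pos.mpr hα) hcos]

noncomputable def oneSubSqCpowNeg (c z : ℂ) : ℂ := cexp (-c * Complex.log (1 - z ^ 2))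

section oneSubSqCpowNeg

variable (c : ℂ) {z : ℂ}

lemma oneSubSqCpowNeg_zero : oneSubSqCpowNeg c 0 = 1 := by simp [oneSubSqCpowNeg]

lemma oneSubSqCpowNeg_ne_zero : oneSubSqCpowNeg c z ≠ 0 := Complex.exp_ne_zero _

lemma analyticAt_oneSubSqCpowNeg (hz : ‖z‖ < 1) : AnalyticAt ℂ (oneSubSqCpowNeg c) z :=
  (analyticAt_const.mul ((analyticAt_const.sub (analyticAt_id.pow 2)).clog
    (one_sub_sq_mem_slitPlane hz))).cexp

lemma hasDerivAt_oneSubSqCpowNeg (hz : ‖z‖ < 1) :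
    HasDerivAt (oneSubSqCpowNeg c) (oneSubSqCpowNeg c z * (2 * c * z / (1 - z ^ 2))) z := by
  have hsp := one_sub_sq_mem_slitPlane hz
  have hsq : HasDerivAt (fun z : ℂ => 1 - z ^ 2) (-(2 * z)) z := by
    simpa using (hasDerivAt_pow 2 z).const_sub 1
  refine ((((hasDerivAt_log hsp).comp z hsq).const_mul (-c)).cexp).congr_deriv ?_
  simp only [oneSubSqCpowNeg, Function.comp_apply]
  field_simp [slitPlane_ne_zero hsp]

lemma deriv_oneSubSqCpowNeg_eventuallyEq :
    deriv (oneSubSqCpowNeg c) =ᶠ[nhds 0]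
      fun z => oneSubSqCpowNeg c z * (2 * c * z / (1 - z ^ 2)) := by
  filter_upwards [ball_mem_nhds (0 : ℂ) one_pos] with z hz
  exact (hasDerivAt_oneSubSqCpowNeg c (mem_ball_zero_iff.mp hz)).deriv

lemma iteratedDeriv_one_oneSubSqCpowNeg_zero : iteratedDeriv 1 (oneSubSqCpowNeg c) 0 = 0 := by
  rw [iteratedDeriv_one, (deriv_oneSubSqCpowNeg_eventuallyEq c).eq_of_nhds]
  simp

lemma iteratedDeriv_two_oneSubSqCpowNeg_zero :
    iteratedDeriv 2 (oneSubSqCpowNeg c) 0 = 2 * c := by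
  rw [iteratedDeriv_succ, iteratedDeriv_one, (deriv_oneSubSqCpowNeg_eventuallyEq c).deriv_eq]
  have hfrac : HasDerivAt (fun z : ℂ => 2 * c * z / (1 - z ^ 2)) (2 * c) 0 := by
    refine ((((hasDerivAt_id (0 : ℂ)).const_mul (2 * c)).div
      ((hasDerivAt_pow 2 (0 : ℂ)).const_sub 1) (by norm_num))).congr_deriv ?_
    simp
  rw [((hasDerivAt_oneSubSqCpowNeg c (by simp)).fun_mul hfrac).deriv]
  simp [oneSubSqCpowNeg_zero]

lemma hasDerivAt_id_mul_oneSubSqCpowNeg (hz : ‖z‖ < 1) :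
    HasDerivAt (fun z => z * oneSubSqCpowNeg c z)
      (oneSubSqCpowNeg c z * (1 + 2 * c * (z ^ 2 / (1 - z ^ 2)))) z := by
  refine ((hasDerivAt_id' z).mul (hasDerivAt_oneSubSqCpowNeg c hz)).congr_deriv ?_
  field_simp [slitPlane_ne_zero (one_sub_sq_mem_slitPlane hz)]

lemma id_mul_deriv_div_id_mul_oneSubSqCpowNeg (hz : ‖z‖ < 1) (hz0 : z ≠ 0) :
    z * deriv (fun z => z * oneSubSqCpowNeg c z) z / (z * oneSubSqCpowNeg c z) =
      1 + 2 * c * (z ^ 2 / (1 - z ^ 2)) := by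
  rw [(hasDerivAt_id_mul_oneSubSqCpowNeg c hz).deriv]
  field_simp [oneSubSqCpowNeg_ne_zero c]

end oneSubSqCpowNeg

theorem stmt_15_general (γ α : ℝ) (hγ₁ : -(π / 2) < γ) (hγ₂ : γ < π / 2)
    (hα₂ : α < 1) (μ : ℂ) (hμ : μ = Complex.exp (↑γ * Complex.I) * Real.cos γ)
    (h : ℂ → ℂ)
    (hh : ∀ z : ℂ, h z = z * Complex.exp (-((1 - α : ℂ) * μ) * Complex.log (1 - z ^ 2))) :
    AnalyticOnNhd ℂ h (ball 0 1) ∧ h 0 = 0 ∧ deriv h 0 = 1 ∧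
      (∀ z ∈ ball (0 : ℂ) 1, z ≠ 0 → h z ≠ 0) ∧
      (∀ z ∈ ball (0 : ℂ) 1, z ≠ 0 →
        α * Real.cos γ < (Complex.exp (-(↑γ * Complex.I)) * (z * deriv h z / h z)).re) ∧
      iteratedDeriv 2 h 0 / 2 = 0 ∧
      iteratedDeriv 3 h 0 / 6 = (1 - α : ℂ) * μ ∧
      ‖iteratedDeriv 3 h 0 / 6‖ - ‖iteratedDeriv 2 h 0 / 2‖ =
        (1 - α) * Real.cos γ := by
  subst hμ
  set c : ℂ := (1 - α : ℂ) * (cexp (γ * I) * Real.cos γ)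
  obtain rfl : h = fun z => z * oneSubSqCpowNeg c z := funext hh
  clear hh
  have hcos : 0 < Real.cos γ := Real.cos_pos_of_mem_Ioo ⟨hγ₁, hγ₂⟩
  have hG : ∀ {n : ℕ}, ContDiffAt ℂ n (oneSubSqCpowNeg c) 0 :=
    (analyticAt_oneSubSqCpowNeg c (by simp)).contDiffAt
  have ha₁ : deriv (fun z => z * oneSubSqCpowNeg c z) 0 = 1 := by
    simpa [oneSubSqCpowNeg_zero] using iteratedDeriv_succ_id_mul_zero (n := 0) hG
  have ha₂ : iteratedDeriv 2 (fun z => z * oneSubSqCpowNeg c z) 0 = 0 := by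
    simpa [iteratedDeriv_one_oneSubSqCpowNeg_zero] using iteratedDeriv_succ_id_mul_zero (n := 1) hG
  have ha₃ : iteratedDeriv 3 (fun z => z * oneSubSqCpowNeg c z) 0 = 6 * c := by
    rw [iteratedDeriv_succ_id_mul_zero hG, iteratedDeriv_two_oneSubSqCpowNeg_zero]
    push_cast
    ring
  refine ⟨fun z hz => analyticAt_id.mul (analyticAt_oneSubSqCpowNeg c (mem_ball_zero_iff.mp hz)),
    zero_mul _, ha₁, fun z _ hz0 => mul_ne_zero hz0 (oneSubSqCpowNeg_ne_zero c), ?_,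
    by simp [ha₂], by simp [ha₃], ?_⟩
  · intro z hz hz0
    have hz1 : ‖z‖ < 1 := mem_ball_zero_iff.mp hz
    rw [id_mul_deriv_div_id_mul_oneSubSqCpowNeg c hz1 hz0]
    exact mul_lt_re_exp_neg_mul_I_mul hcos hα₂ (neg_half_lt_re_div_one_sub (norm_sq_lt_one hz1))
  · have hc : ‖c‖ = (1 - α) * Real.cos γ := by
      rw [norm_mul, norm_mul, norm_exp_ofReal_mul_I, ← ofReal_one, ← ofReal_sub, norm_real,
        norm_real, Real.norm_of_nonneg (sub_nonneg.mpr hα₂.le), Real.norm_of_nonneg hcos.le,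
        one_mul]
    simp [ha₂, ha₃, hc]

/-- For `-π/2 < γ < π/2`, `0 ≤ α < 1`, `μ = e^{iγ} cos γ`, the function
`h_{γ,α}(z) = z/(1 - z²)^{(1-α)μ} = z · exp(-(1-α)μ Log(1 - z²))` belongs to `S_γ(α)`
and has `a₂ = 0`, `a₃ = (1-α)μ`, hence `|a₃| - |a₂| = (1-α) cos γ`. -/
theorem stmt_15 (γ α : ℝ) (hγ₁ : -(π / 2) < γ) (hγ₂ : γ < π / 2)
    (hα₁ : 0 ≤ α) (hα₂ : α < 1) (μ : ℂ) (hμ : μ = Complex.exp (↑γ * Complex.I) * Real.cos γ)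
    (h : ℂ → ℂ)
    (hh : ∀ z : ℂ, h z = z * Complex.exp (-((1 - α : ℂ) * μ) * Complex.log (1 - z ^ 2))) :
    AnalyticOnNhd ℂ h (ball 0 1) ∧ h 0 = 0 ∧ deriv h 0 = 1 ∧
      (∀ z ∈ ball (0 : ℂ) 1, z ≠ 0 → h z ≠ 0) ∧
      (∀ z ∈ ball (0 : ℂ) 1, z ≠ 0 →
        α * Real.cos γ < (Complex.exp (-(↑γ * Complex.I)) * (z * deriv h z / h z)).re) ∧
      iteratedDeriv 2 h 0 / 2 = 0 ∧
      iteratedDeriv 3 h 0 / 6 = (1 - α : ℂ) * μ ∧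
      ‖iteratedDeriv 3 h 0 / 6‖ - ‖iteratedDeriv 2 h 0 / 2‖ =
        (1 - α) * Real.cos γ :=
  stmt_15_general γ α hγ₁ hγ₂ hα₂ μ hμ h hh
end
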